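/- arXiv:1307.7622 — 4 statements merged into one kernel-verified Lean document; each statement's English description precedes it below -/
import Mathlib

section
/- Consider the optimization problem min over (E^s, E^b ∈ ℝ^n) of f(E^s, E^b) = C(E^c + E^s - Σ_j E^b_j) + Σ_j γ(E^b_j) + Σ_j λ_j E^b_j - λ_i E^s subject to E^s ≥ 0, E^b_j ≥ 0 for all j, and E^c + E^s - Σ_j E^b_j ≥ 0, where C and γ are strictly convex, increasing, and differentiable, and E^c > 0. If λ_i ≤ C'(E^c) and min_j λ_j ≥ C'(E^c) - γ'(0), then the point E^s = 0, E^b = 0 is a global minimizer. -/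
open Set Finset

/-! Importing a marginal unit costs `γ'(0)` plus its price, which is at least the marginal generation
cost it replaces; selling earns at most that cost. Both comparisons follow from the tangent-line
inequalities of `C` at `Ec` and of `γ` at `0`. -/

theorem ConvexOn.add_deriv_mul_sub_le {S : Set ℝ} {f : ℝ → ℝ} (hf : ConvexOn ℝ S f) {x y : ℝ}
    (hx : x ∈ S) (hy : y ∈ S) (hfx : DifferentiableAt ℝ f x) :
    f x + deriv f x * (y - x) ≤ f y := by
  rcases lt_trichotomy x y with hxy | rfl | hyx
  · have := hf.deriv_le_slope hx hy hxy hfx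
    rw [slope_def_field, le_div_iff₀ (sub_pos.mpr hxy)] at this
    linarith
  · simp
  · have := hf.slope_le_deriv hy hx hyx hfx
    rw [slope_def_field, div_le_iff₀ (sub_pos.mpr hyx)] at this
    linarith

theorem case1_no_trade_optimal_general
    {ι : Type*} [Fintype ι]
    (C γ : ℝ → ℝ)
    (hCconv : StrictConvexOn ℝ Set.univ C)
    (hCdiff : Differentiable ℝ C)
    (hγconv : StrictConvexOn ℝ Set.univ γ)
    (hγdiff : Differentiable ℝ γ) (hγ0 : γ 0 = 0)
    (Ec : ℝ)
    (lamI : ℝ) (lam : ι → ℝ)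
    (hsell : lamI ≤ deriv C Ec)
    (hbuy : ∀ j, deriv C Ec - deriv γ 0 ≤ lam j) :
    ∀ (Es : ℝ) (Eb : ι → ℝ), 0 ≤ Es → (∀ j, 0 ≤ Eb j) →
      0 ≤ Ec + Es - ∑ j, Eb j →
      C (Ec + 0 - ∑ _j : ι, (0 : ℝ)) + ∑ _j : ι, γ (0 : ℝ) + ∑ j : ι, lam j * 0 - lamI * 0 ≤
        C (Ec + Es - ∑ j, Eb j) + ∑ j, γ (Eb j) + ∑ j, lam j * Eb j - lamI * Es := by
  intro Es Eb hEs hEb _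
  have hgeneration : C Ec + deriv C Ec * (Es - ∑ j, Eb j) ≤ C (Ec + Es - ∑ j, Eb j) := by
    simpa [add_sub_assoc] using
      hCconv.convexOn.add_deriv_mul_sub_le (mem_univ Ec) (mem_univ (Ec + Es - ∑ j, Eb j)) (hCdiff Ec)
  have himport_unit (j : ι) : deriv C Ec * Eb j ≤ γ (Eb j) + lam j * Eb j := by
    have htangent := hγconv.convexOn.add_deriv_mul_sub_le (mem_univ 0) (mem_univ (Eb j)) (hγdiff 0)
    rw [hγ0, zero_add, sub_zero] at htangent
    linarith [mul_le_mul_of_nonneg_right (hbuy j) (hEb j)]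
  have himports : deriv C Ec * ∑ j, Eb j ≤ ∑ j, γ (Eb j) + ∑ j, lam j * Eb j := by
    rw [mul_sum, ← sum_add_distrib]
    exact sum_le_sum fun j _ => himport_unit j
  have hsales : lamI * Es ≤ deriv C Ec * Es := mul_le_mul_of_nonneg_right hsell hEs
  simp only [hγ0, mul_zero, sub_zero, add_zero, sum_const_zero]
  linarith

/-- Case 1 of the microgrid subproblem: if the selling price is below the marginal
generation cost and all buying prices are above the marginal benefit, then neither
selling nor buying (`Es = 0`, `Eb = 0`) is a global minimizer. -/
theorem case1_no_trade_optimal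
    {ι : Type*} [Fintype ι]
    (C γ : ℝ → ℝ)
    (hCconv : StrictConvexOn ℝ Set.univ C) (hCmono : StrictMono C)
    (hCdiff : Differentiable ℝ C)
    (hγconv : StrictConvexOn ℝ Set.univ γ) (hγmono : StrictMono γ)
    (hγdiff : Differentiable ℝ γ) (hγ0 : γ 0 = 0)
    (Ec : ℝ) (hEc : 0 < Ec)
    (lamI : ℝ) (lam : ι → ℝ)
    (hsell : lamI ≤ deriv C Ec)
    (hbuy : ∀ j, deriv C Ec - deriv γ 0 ≤ lam j) :
    ∀ (Es : ℝ) (Eb : ι → ℝ), 0 ≤ Es → (∀ j, 0 ≤ Eb j) →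
      0 ≤ Ec + Es - ∑ j, Eb j →
      C (Ec + 0 - ∑ _j : ι, (0 : ℝ)) + ∑ _j : ι, γ (0 : ℝ) + ∑ j : ι, lam j * 0 - lamI * 0 ≤
        C (Ec + Es - ∑ j, Eb j) + ∑ j, γ (Eb j) + ∑ j, lam j * Eb j - lamI * Es :=
  case1_no_trade_optimal_general C γ hCconv hCdiff hγconv hγdiff hγ0 Ec lamI lam hsell hbuy
end

section
/- Consider minimizing f(E^s, E^b) = C(E^c + E^s - Σ_j E^b_j) + Σ_j γ(E^b_j) + Σ_j λ_j E^b_j - λ_i E^s over E^s ≥ 0, E^b_j ≥ 0, E^c + E^s - Σ_j E^b_j ≥ 0, with C, γ strictly convex increasing differentiable and γ(0)=0. If λ_i > C'(E^c) and λ_j ≥ λ_i - γ'(0) for all j, then the unique global minimizer is E^b = 0 and E^s = χ(λ_i) - E^c, where χ is the inverse of C'. -/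
/-!
Substituting the net generation `x = Ec + Es - ∑ Eb` splits the objective into
`(C x - λᵢ x) + ∑ⱼ (γ (Eb j) + (λⱼ - λᵢ) Eb j) + λᵢ Ec`.
By the strict tangent-line inequality, the first summand is uniquely minimised at the point `g`
where `C' g = λᵢ`, and since `λⱼ - λᵢ ≥ -γ'(0)` each term of the sum is positive unless
`Eb j = 0`. Finally `C'` is strictly increasing, so `C' Ec < λᵢ = C' g` gives `Ec < g`,
i.e. the candidate `Es = g - Ec` is feasible.
-/

open Set Finset

/-- Local net expenditure of a microgrid. -/
noncomputable def netExpenditure {ι : Type*} [Fintype ι]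
    (C γ : ℝ → ℝ) (Ec lamI : ℝ) (lam : ι → ℝ) (Es : ℝ) (Eb : ι → ℝ) : ℝ :=
  C (Ec + Es - ∑ j, Eb j) + ∑ j, γ (Eb j) + ∑ j, lam j * Eb j - lamI * Es

theorem StrictConvexOn.add_deriv_mul_sub_lt {S : Set ℝ} {f : ℝ → ℝ} (hf : StrictConvexOn ℝ S f)
    {a x : ℝ} (ha : a ∈ S) (hx : x ∈ S) (hfa : DifferentiableAt ℝ f a) (hxa : x ≠ a) :
    f a + deriv f a * (x - a) < f x := by
  rcases hxa.lt_or_gt with h | h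
  · have hslope := hf.slope_lt_deriv hx ha h hfa
    rw [slope_def_field, div_lt_iff₀ (sub_pos.2 h)] at hslope
    linarith
  · have hslope := hf.deriv_lt_slope ha hx h hfa
    rw [slope_def_field, lt_div_iff₀ (sub_pos.2 h)] at hslope
    linarith

theorem StrictConvexOn.sub_mul_lt_of_deriv_eq {f : ℝ → ℝ} (hf : StrictConvexOn ℝ univ f)
    {p a x : ℝ} (hfa : DifferentiableAt ℝ f a) (hp : deriv f a = p) (hxa : x ≠ a) :
    f a - p * a < f x - p * x := by
  have := hf.add_deriv_mul_sub_lt (mem_univ a) (mem_univ x) hfa hxa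
  rw [hp] at this
  linarith

theorem StrictConvexOn.sub_mul_le_of_deriv_eq {f : ℝ → ℝ} (hf : StrictConvexOn ℝ univ f)
    {p a x : ℝ} (hfa : DifferentiableAt ℝ f a) (hp : deriv f a = p) :
    f a - p * a ≤ f x - p * x := by
  rcases eq_or_ne x a with rfl | hxa
  · rfl
  · exact (hf.sub_mul_lt_of_deriv_eq hfa hp hxa).le

theorem StrictConvexOn.add_mul_pos {γ : ℝ → ℝ} (hγ : StrictConvexOn ℝ (Ici 0) γ)
    (hγd : DifferentiableAt ℝ γ 0) (hγ0 : γ 0 = 0) {μ t : ℝ} (hμ : -deriv γ 0 ≤ μ) (ht : 0 < t) :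
    0 < γ t + μ * t := by
  have := hγ.add_deriv_mul_sub_lt self_mem_Ici ht.le hγd ht.ne'
  rw [hγ0] at this
  nlinarith

theorem StrictConvexOn.add_mul_nonneg {γ : ℝ → ℝ} (hγ : StrictConvexOn ℝ (Ici 0) γ)
    (hγd : DifferentiableAt ℝ γ 0) (hγ0 : γ 0 = 0) {μ t : ℝ} (hμ : -deriv γ 0 ≤ μ) (ht : 0 ≤ t) :
    0 ≤ γ t + μ * t := by
  rcases ht.eq_or_lt with rfl | ht
  · simp [hγ0]
  · exact (hγ.add_mul_pos hγd hγ0 hμ ht).le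

theorem netExpenditure_eq {ι : Type*} [Fintype ι] (C γ : ℝ → ℝ) (Ec lamI : ℝ) (lam : ι → ℝ)
    (Es : ℝ) (Eb : ι → ℝ) :
    netExpenditure C γ Ec lamI lam Es Eb =
      (C (Ec + Es - ∑ j, Eb j) - lamI * (Ec + Es - ∑ j, Eb j)) +
        ∑ j, (γ (Eb j) + (lam j - lamI) * Eb j) + lamI * Ec := by
  simp only [netExpenditure, sum_add_distrib, sub_mul, sum_sub_distrib, ← mul_sum]
  ring

theorem case4_generate_and_sell_general
    {ι : Type*} [Fintype ι]
    (C γ : ℝ → ℝ)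
    (hCconv : StrictConvexOn ℝ Set.univ C)
    (hCdiff : Differentiable ℝ C)
    (hγconv : StrictConvexOn ℝ Set.univ γ)
    (hγdiff : Differentiable ℝ γ) (hγ0 : γ 0 = 0)
    (Ec : ℝ) (hEc : 0 < Ec)
    (lamI : ℝ) (lam : ι → ℝ)
    (g : ℝ) (hg : deriv C g = lamI)  -- g = χ(λᵢ): λᵢ is in the range of C'
    (hsell : lamI > deriv C Ec)
    (hbuy : ∀ j, lam j ≥ lamI - deriv γ 0) :
    (0 ≤ g - Ec ∧ (∀ j : ι, (0:ℝ) ≤ 0) ∧ 0 ≤ Ec + (g - Ec) - ∑ _j : ι, (0:ℝ)) ∧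
    ∀ (Es : ℝ) (Eb : ι → ℝ), 0 ≤ Es → (∀ j, 0 ≤ Eb j) →
      0 ≤ Ec + Es - ∑ j, Eb j →
      netExpenditure C γ Ec lamI lam (g - Ec) (fun _ => 0) ≤
          netExpenditure C γ Ec lamI lam Es Eb ∧
        (netExpenditure C γ Ec lamI lam Es Eb =
            netExpenditure C γ Ec lamI lam (g - Ec) (fun _ => 0) →
          Es = g - Ec ∧ Eb = fun _ => 0) := by
  have hEcg : Ec < g :=
    (strictMonoOn_univ.1 (hCconv.strictMonoOn_deriv fun x _ => hCdiff x)).lt_iff_lt.1 (hg ▸ hsell)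
  refine ⟨⟨by linarith, fun _ => le_rfl, by simp; linarith⟩, fun Es Eb _ hEb _ => ?_⟩
  have hγ' := hγconv.subset (subset_univ _) (convex_Ici 0)
  have hslack_pos : ∀ j, 0 < Eb j → 0 < γ (Eb j) + (lam j - lamI) * Eb j := fun j =>
    hγ'.add_mul_pos (hγdiff 0) hγ0 (by linarith [hbuy j])
  have hslack : ∀ j ∈ Finset.univ, 0 ≤ γ (Eb j) + (lam j - lamI) * Eb j := fun j _ =>
    hγ'.add_mul_nonneg (hγdiff 0) hγ0 (by linarith [hbuy j]) (hEb j)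
  have hCx := fun x => hCconv.sub_mul_le_of_deriv_eq (x := x) (hCdiff g) hg
  have hopt : netExpenditure C γ Ec lamI lam (g - Ec) (fun _ => 0) = C g - lamI * g + lamI * Ec := by
    simp [netExpenditure_eq, hγ0]
  rw [hopt, netExpenditure_eq]
  set x := Ec + Es - ∑ j, Eb j with hx
  refine ⟨by linarith [hCx x, sum_nonneg hslack], fun heq => ?_⟩
  have hxg : x = g := by
    by_contra h
    linarith [hCconv.sub_mul_lt_of_deriv_eq (hCdiff g) hg h, sum_nonneg hslack]
  have hslack0 := (sum_eq_zero_iff_of_nonneg hslack).1 (by rw [hxg] at heq; linarith)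
  have hEb0 : ∀ j, Eb j = 0 := fun j => (hEb j).eq_or_lt.elim Eq.symm fun h =>
    absurd (hslack0 j (Finset.mem_univ j)) (hslack_pos j h).ne'
  refine ⟨?_, funext hEb0⟩
  simp only [hEb0, sum_const_zero] at hx
  linarith

/-- Case 4 of the microgrid subproblem: generate and sell, do not buy.
The unique global minimizer is `Eb = 0`, `Es = χ(λᵢ) - Ec` where `χ = (C')⁻¹`. -/
theorem case4_generate_and_sell
    {ι : Type*} [Fintype ι]
    (C γ : ℝ → ℝ)
    (hCconv : StrictConvexOn ℝ Set.univ C) (hCmono : StrictMono C)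
    (hCdiff : Differentiable ℝ C)
    (hγconv : StrictConvexOn ℝ Set.univ γ) (hγmono : StrictMono γ)
    (hγdiff : Differentiable ℝ γ) (hγ0 : γ 0 = 0)
    (Ec : ℝ) (hEc : 0 < Ec)
    (lamI : ℝ) (lam : ι → ℝ)
    (g : ℝ) (hg : deriv C g = lamI)  -- g = χ(λᵢ): λᵢ is in the range of C'
    (hsell : lamI > deriv C Ec)
    (hbuy : ∀ j, lam j ≥ lamI - deriv γ 0) :
    (0 ≤ g - Ec ∧ (∀ j : ι, (0:ℝ) ≤ 0) ∧ 0 ≤ Ec + (g - Ec) - ∑ _j : ι, (0:ℝ)) ∧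
    ∀ (Es : ℝ) (Eb : ι → ℝ), 0 ≤ Es → (∀ j, 0 ≤ Eb j) →
      0 ≤ Ec + Es - ∑ j, Eb j →
      netExpenditure C γ Ec lamI lam (g - Ec) (fun _ => 0) ≤
          netExpenditure C γ Ec lamI lam Es Eb ∧
        (netExpenditure C γ Ec lamI lam Es Eb =
            netExpenditure C γ Ec lamI lam (g - Ec) (fun _ => 0) →
          Es = g - Ec ∧ Eb = fun _ => 0) :=
  case4_generate_and_sell_general C γ hCconv hCdiff hγconv hγdiff hγ0 Ec hEc lamI lam g hg hsell
    hbuy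
end

section
/- Consider minimizing f(E^s, E^b) = C(E^c + E^s - Σ_j E^b_j) + Σ_j γ(E^b_j) + Σ_j λ_j E^b_j - λ_i E^s over E^s ≥ 0, E^b_j ≥ 0, E^c + E^s - Σ_j E^b_j ≥ 0, with C, γ strictly convex increasing differentiable, γ(0)=0, E^c > 0. Let S* = {j : λ_j < λ_i - γ'(0)} and suppose λ_i > C'(0), S* ≠ ∅, and λ_i > C'(E^c - Σ_{j∈S*} Γ(λ_i - λ_j)), where Γ = (γ')⁻¹. Then the unique global minimizer is E^b_j = Γ(λ_i - λ_j) for j ∈ S*, E^b_j = 0 otherwise, generated energy E^g = χ(λ_i) with χ = (C')⁻¹, and E^s = E^g + Σ_{j∈S*} E^b_j - E^c. -/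
/-!
Writing `G = Ec + Es - ∑ j, Eb j` for the generated energy, the objective separates as
`(C G - λᵢ G) + ∑ j, (γ (Eb j) - (λᵢ - λⱼ) Eb j) + λᵢ Ec`, and each summand is strictly convex in
its own variable. The first is uniquely minimised where `C' G = λᵢ`, i.e. at `G = χ(λᵢ)`. The
`j`-th purchase term is uniquely minimised on `Eb j ≥ 0` at its stationary point `Γ(λᵢ - λⱼ)`
when `λᵢ - λⱼ > γ'(0)`, and at the boundary point `0` otherwise, where its slope
`γ'(0) - (λᵢ - λⱼ)` is already nonnegative.
-/

open Set Finset

namespace StrictConvexOn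

variable {S : Set ℝ} {f : ℝ → ℝ} {a x f' : ℝ}

theorem add_mul_sub_lt_of_hasDerivAt (hf : StrictConvexOn ℝ S f) (ha : a ∈ S) (hx : x ∈ S)
    (hfa : HasDerivAt f f' a) (hxa : x ≠ a) : f a + f' * (x - a) < f x := by
  rcases hxa.lt_or_gt with hlt | hgt
  · have hslope := hf.slope_lt_of_hasDerivAt hx ha hlt hfa
    rw [slope_def_field, div_lt_iff₀ (sub_pos.mpr hlt)] at hslope
    linarith
  · have hslope := hf.lt_slope_of_hasDerivAt ha hx hgt hfa
    rw [slope_def_field, lt_div_iff₀ (sub_pos.mpr hgt)] at hslope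
    linarith

theorem sub_mul_lt_sub_mul_of_hasDerivAt (hf : StrictConvexOn ℝ S f) (ha : a ∈ S) (hx : x ∈ S)
    (hfa : HasDerivAt f f' a) (hxa : x ≠ a) : f a - f' * a < f x - f' * x := by
  linarith [hf.add_mul_sub_lt_of_hasDerivAt ha hx hfa hxa]

theorem sub_mul_lt_sub_mul_of_le_of_hasDerivAt {c : ℝ} (hf : StrictConvexOn ℝ S f) (ha : a ∈ S)
    (hx : x ∈ S) (hfa : HasDerivAt f f' a) (hc : c ≤ f') (hax : a < x) :
    f a - c * a < f x - c * x := by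
  nlinarith [hf.add_mul_sub_lt_of_hasDerivAt ha hx hfa hax.ne']

end StrictConvexOn

theorem purchaseCost_lt_of_ne {γ : ℝ → ℝ} (hγ : StrictConvexOn ℝ univ γ)
    (hγd : Differentiable ℝ γ) {lamI l B : ℝ}
    (hB : l < lamI - deriv γ 0 → deriv γ B = lamI - l) {t : ℝ} (ht : 0 ≤ t)
    (hne : t ≠ if l < lamI - deriv γ 0 then B else 0) :
    γ (if l < lamI - deriv γ 0 then B else 0) - (lamI - l) * (if l < lamI - deriv γ 0 then B else 0)
      < γ t - (lamI - l) * t := by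
  split_ifs at hne ⊢ with hl
  · exact hγ.sub_mul_lt_sub_mul_of_hasDerivAt (mem_univ _) (mem_univ _)
      (hB hl ▸ (hγd B).hasDerivAt) hne
  · exact hγ.sub_mul_lt_sub_mul_of_le_of_hasDerivAt (mem_univ _) (mem_univ _)
      (hγd 0).hasDerivAt (by linarith) (ht.lt_of_ne' hne)

section netExpenditure

variable {ι : Type*} [Fintype ι] {C γ : ℝ → ℝ} {Ec lamI : ℝ} {lam : ι → ℝ}

theorem netExpenditure_eq_separated (Es : ℝ) (Eb : ι → ℝ) :
    netExpenditure C γ Ec lamI lam Es Eb =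
      (C (Ec + Es - ∑ j, Eb j) - lamI * (Ec + Es - ∑ j, Eb j)) +
        ∑ j, (γ (Eb j) - (lamI - lam j) * Eb j) + lamI * Ec := by
  simp only [netExpenditure, Finset.sum_sub_distrib, sub_mul, ← Finset.mul_sum]
  ring

theorem netExpenditure_lt_of_ne (hC : StrictConvexOn ℝ univ C) {g : ℝ} (hg : HasDerivAt C lamI g)
    {b : ι → ℝ}
    (hb : ∀ j t, 0 ≤ t → t ≠ b j → γ (b j) - (lamI - lam j) * b j < γ t - (lamI - lam j) * t)
    {Es : ℝ} {Eb : ι → ℝ} (hEb : ∀ j, 0 ≤ Eb j) (hne : ¬(Es = g + ∑ j, b j - Ec ∧ Eb = b)) :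
    netExpenditure C γ Ec lamI lam (g + ∑ j, b j - Ec) b <
      netExpenditure C γ Ec lamI lam Es Eb := by
  rw [netExpenditure_eq_separated, netExpenditure_eq_separated,
    show Ec + (g + ∑ j, b j - Ec) - ∑ j, b j = g by ring]
  set G := Ec + Es - ∑ j, Eb j
  have hC_le (hG : G ≠ g) : C g - lamI * g < C G - lamI * G :=
    hC.sub_mul_lt_sub_mul_of_hasDerivAt (mem_univ _) (mem_univ _) hg hG
  have hb_le (j : ι) : γ (b j) - (lamI - lam j) * b j ≤ γ (Eb j) - (lamI - lam j) * Eb j := by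
    rcases eq_or_ne (Eb j) (b j) with h | h
    · rw [h]
    · exact (hb j _ (hEb j) h).le
  by_cases hEbb : Eb = b
  · have hG : G ≠ g := fun hG => hne ⟨by simp only [G, hEbb] at hG; linarith, hEbb⟩
    rw [hEbb]
    linarith [hC_le hG]
  · obtain ⟨j, hj⟩ := Function.ne_iff.mp hEbb
    have hsum := Finset.sum_lt_sum (fun j _ => hb_le j) ⟨j, mem_univ j, hb j _ (hEb j) hj⟩
    rcases eq_or_ne G g with hG | hG
    · rw [hG]; linarith
    · linarith [hC_le hG]

end netExpenditure

theorem case6_sell_buy_generate_general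
    {ι : Type*} [Fintype ι]
    (C γ : ℝ → ℝ)
    (hCconv : StrictConvexOn ℝ Set.univ C)
    (hCdiff : Differentiable ℝ C)
    (hγconv : StrictConvexOn ℝ Set.univ γ)
    (hγdiff : Differentiable ℝ γ)
    (Ec : ℝ)
    (lamI : ℝ) (lam : ι → ℝ)
    (g : ℝ) (hg : deriv C g = lamI)  -- g = χ(λᵢ)
    (B : ι → ℝ)
    (hB : ∀ j, lam j < lamI - deriv γ 0 → deriv γ (B j) = lamI - lam j ∧ 0 < B j) :
    ∀ (Es : ℝ) (Eb : ι → ℝ), 0 ≤ Es → (∀ j, 0 ≤ Eb j) →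
      0 ≤ Ec + Es - ∑ j, Eb j →
      netExpenditure C γ Ec lamI lam
          (g + (∑ j ∈ Finset.univ.filter (fun j => lam j < lamI - deriv γ 0), B j) - Ec)
          (fun j => if lam j < lamI - deriv γ 0 then B j else 0) ≤
        netExpenditure C γ Ec lamI lam Es Eb ∧
      (netExpenditure C γ Ec lamI lam Es Eb =
          netExpenditure C γ Ec lamI lam
            (g + (∑ j ∈ Finset.univ.filter (fun j => lam j < lamI - deriv γ 0), B j) - Ec)
            (fun j => if lam j < lamI - deriv γ 0 then B j else 0) →
        Es = g + (∑ j ∈ Finset.univ.filter (fun j => lam j < lamI - deriv γ 0), B j) - Ec ∧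
          Eb = fun j => if lam j < lamI - deriv γ 0 then B j else 0) := by
  intro Es Eb _ hEb _
  set b : ι → ℝ := fun j => if lam j < lamI - deriv γ 0 then B j else 0
  rw [Finset.sum_filter]
  have hlt (hne : ¬(Es = g + ∑ j, b j - Ec ∧ Eb = b)) :=
    netExpenditure_lt_of_ne hCconv (hg ▸ (hCdiff g).hasDerivAt)
      (fun j _ ht hne => purchaseCost_lt_of_ne hγconv hγdiff (fun hj => (hB j hj).1) ht hne) hEb hne
  refine ⟨?_, fun heq => ?_⟩
  · by_cases hopt : Es = g + ∑ j, b j - Ec ∧ Eb = b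
    · rw [hopt.1, hopt.2]
    · exact (hlt hopt).le
  · by_contra hne
    exact (hlt hne).ne' heq

/-- Case 6 of the microgrid subproblem: the microgrid sells, buys and generates.
`g = χ(λᵢ)` is the generated energy and `B j = Γ(λᵢ - λⱼ)` the bought energies. -/
theorem case6_sell_buy_generate
    {ι : Type*} [Fintype ι]
    (C γ : ℝ → ℝ)
    (hCconv : StrictConvexOn ℝ Set.univ C) (hCmono : StrictMono C)
    (hCdiff : Differentiable ℝ C)
    (hγconv : StrictConvexOn ℝ Set.univ γ) (hγmono : StrictMono γ)
    (hγdiff : Differentiable ℝ γ) (hγ0 : γ 0 = 0)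
    (Ec : ℝ) (hEc : 0 < Ec)
    (lamI : ℝ) (lam : ι → ℝ)
    (g : ℝ) (hg : deriv C g = lamI)  -- g = χ(λᵢ)
    (B : ι → ℝ)
    (hB : ∀ j, lam j < lamI - deriv γ 0 → deriv γ (B j) = lamI - lam j ∧ 0 < B j)
    (hlamI : lamI > deriv C 0)
    (hSne : ∃ j, lam j < lamI - deriv γ 0)
    (hgen : lamI > deriv C (Ec - ∑ j ∈ Finset.univ.filter
        (fun j => lam j < lamI - deriv γ 0), B j)) :
    ∀ (Es : ℝ) (Eb : ι → ℝ), 0 ≤ Es → (∀ j, 0 ≤ Eb j) →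
      0 ≤ Ec + Es - ∑ j, Eb j →
      netExpenditure C γ Ec lamI lam
          (g + (∑ j ∈ Finset.univ.filter (fun j => lam j < lamI - deriv γ 0), B j) - Ec)
          (fun j => if lam j < lamI - deriv γ 0 then B j else 0) ≤
        netExpenditure C γ Ec lamI lam Es Eb ∧
      (netExpenditure C γ Ec lamI lam Es Eb =
          netExpenditure C γ Ec lamI lam
            (g + (∑ j ∈ Finset.univ.filter (fun j => lam j < lamI - deriv γ 0), B j) - Ec)
            (fun j => if lam j < lamI - deriv γ 0 then B j else 0) →
        Es = g + (∑ j ∈ Finset.univ.filter (fun j => lam j < lamI - deriv γ 0), B j) - Ec ∧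
          Eb = fun j => if lam j < lamI - deriv γ 0 then B j else 0) :=
  case6_sell_buy_generate_general C γ hCconv hCdiff hγconv hγdiff Ec lamI lam g hg B hB
end

section
/- Consider minimizing f(E^s, E^b) = C(E^c + E^s - Σ_j E^b_j) + Σ_j γ(E^b_j) + Σ_j λ_j E^b_j - λ_i E^s over E^s ≥ 0, E^b_j ≥ 0, E^c + E^s - Σ_j E^b_j ≥ 0, with C, γ strictly convex increasing differentiable, γ(0)=0, E^c > 0. Let S* = {j : λ_j < λ_i - γ'(0)} and suppose λ_i ≤ C'(0), S* ≠ ∅, and Σ_{j∈S*} Γ(λ_i - λ_j) > E^c, where Γ = (γ')⁻¹. Then the unique global minimizer is E^b_j = Γ(λ_i - λ_j) for j ∈ S*, E^b_j = 0 otherwise, E^g = E^c + E^s - Σ_j E^b_j = 0, and E^s = Σ_{j∈S*} E^b_j - E^c > 0. -/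
/-!
Writing `g = Ec + Es - ∑ j, Eb j` for the generated energy, the objective splits as
`(C g - λᵢ g) + ∑ j, (γ (Eb j) - (λᵢ - λⱼ) Eb j) + λᵢ Ec`, a sum of strictly convex functions of the
independent variables `g ≥ 0` and `Eb j ≥ 0` (`Es` is then determined). Each summand is minimized
by its first-order condition: `C' 0 ≥ λᵢ` puts the minimum of the first at `g = 0`, and the
minimum of the `j`-th purchase term is at `Γ (λᵢ - λⱼ)` when `γ' 0 < λᵢ - λⱼ` and at `0` otherwise.
-/

open Set Finset

namespace StrictConvexOn

variable {S : Set ℝ} {f : ℝ → ℝ} {a x c : ℝ}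

theorem sub_mul_lt_of_le_deriv (hf : StrictConvexOn ℝ S f) (ha : a ∈ S) (hx : x ∈ S)
    (hd : DifferentiableAt ℝ f a) (hc : c ≤ deriv f a) (hax : a < x) :
    f a - c * a < f x - c * x := by
  have hslope := hf.deriv_lt_slope ha hx hax hd
  rw [slope_def_field, lt_div_iff₀ (sub_pos.mpr hax)] at hslope
  nlinarith

theorem sub_mul_lt_of_deriv_le (hf : StrictConvexOn ℝ S f) (ha : a ∈ S) (hx : x ∈ S)
    (hd : DifferentiableAt ℝ f a) (hc : deriv f a ≤ c) (hxa : x < a) :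
    f a - c * a < f x - c * x := by
  have hslope := hf.slope_lt_deriv hx ha hxa hd
  rw [slope_def_field, div_lt_iff₀ (sub_pos.mpr hxa)] at hslope
  nlinarith

theorem sub_mul_lt_of_deriv_eq_s8 (hf : StrictConvexOn ℝ S f) (ha : a ∈ S) (hx : x ∈ S)
    (hd : DifferentiableAt ℝ f a) (hc : deriv f a = c) (hxa : x ≠ a) :
    f a - c * a < f x - c * x := by
  rcases hxa.lt_or_gt with hxa | hax
  · exact hf.sub_mul_lt_of_deriv_le ha hx hd hc.le hxa
  · exact hf.sub_mul_lt_of_le_deriv ha hx hd hc.ge hax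

end StrictConvexOn

theorem add_sum_lt_add_sum_of_ne {ι : Type*} [Fintype ι] {Φ : ℝ → ℝ} {ψ : ι → ℝ → ℝ}
    {g₀ g : ℝ} {b x : ι → ℝ} (hΦ : g ≠ g₀ → Φ g₀ < Φ g)
    (hψ : ∀ j, x j ≠ b j → ψ j (b j) < ψ j (x j)) (hne : g ≠ g₀ ∨ x ≠ b) :
    Φ g₀ + ∑ j, ψ j (b j) < Φ g + ∑ j, ψ j (x j) := by
  have hψle : ∀ j ∈ Finset.univ, ψ j (b j) ≤ ψ j (x j) := fun j _ => by
    by_cases hj : x j = b j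
    · rw [hj]
    · exact (hψ j hj).le
  rcases hne with hg | hx
  · exact add_lt_add_of_lt_of_le (hΦ hg) (Finset.sum_le_sum hψle)
  · have hg : Φ g₀ ≤ Φ g := by
      by_cases hg : g = g₀
      · rw [hg]
      · exact (hΦ hg).le
    obtain ⟨j, hj⟩ := Function.ne_iff.mp hx
    exact add_lt_add_of_le_of_lt hg
      (Finset.sum_lt_sum hψle ⟨j, Finset.mem_univ j, hψ j hj⟩)

theorem netExpenditure_eq_add_sum {ι : Type*} [Fintype ι] (C γ : ℝ → ℝ) (Ec lamI : ℝ)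
    (lam : ι → ℝ) (Es : ℝ) (Eb : ι → ℝ) :
    netExpenditure C γ Ec lamI lam Es Eb =
      (C (Ec + Es - ∑ j, Eb j) - lamI * (Ec + Es - ∑ j, Eb j)) +
        ∑ j, (γ (Eb j) - (lamI - lam j) * Eb j) + lamI * Ec := by
  simp only [netExpenditure, sub_mul, Finset.sum_sub_distrib, ← Finset.mul_sum]
  ring

/-- `B j` encodes `Γ (λᵢ - λⱼ)` through the first-order condition `γ' (B j) = λᵢ - λⱼ`. -/
theorem case5_sell_buy_no_generation_general
    {ι : Type*} [Fintype ι]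
    (C γ : ℝ → ℝ)
    (hCconv : StrictConvexOn ℝ Set.univ C)
    (hCdiff : Differentiable ℝ C)
    (hγconv : StrictConvexOn ℝ Set.univ γ)
    (hγdiff : Differentiable ℝ γ)
    (Ec : ℝ)
    (lamI : ℝ) (lam : ι → ℝ)
    (B : ι → ℝ)
    (hB : ∀ j, lam j < lamI - deriv γ 0 → deriv γ (B j) = lamI - lam j ∧ 0 < B j)
    (hlamI : lamI ≤ deriv C 0)
    (hbig : Ec < ∑ j ∈ Finset.univ.filter (fun j => lam j < lamI - deriv γ 0), B j) :
    -- the optimal sold energy is positive and the generated energy is zero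
    (0 < (∑ j ∈ Finset.univ.filter (fun j => lam j < lamI - deriv γ 0), B j) - Ec ∧
      Ec + ((∑ j ∈ Finset.univ.filter (fun j => lam j < lamI - deriv γ 0), B j) - Ec) -
        (∑ j, (if lam j < lamI - deriv γ 0 then B j else 0)) = 0) ∧
    -- unique global minimizer
    ∀ (Es : ℝ) (Eb : ι → ℝ), 0 ≤ Es → (∀ j, 0 ≤ Eb j) →
      0 ≤ Ec + Es - ∑ j, Eb j →
      netExpenditure C γ Ec lamI lam
          ((∑ j ∈ Finset.univ.filter (fun j => lam j < lamI - deriv γ 0), B j) - Ec)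
          (fun j => if lam j < lamI - deriv γ 0 then B j else 0) ≤
        netExpenditure C γ Ec lamI lam Es Eb ∧
      (netExpenditure C γ Ec lamI lam Es Eb =
          netExpenditure C γ Ec lamI lam
            ((∑ j ∈ Finset.univ.filter (fun j => lam j < lamI - deriv γ 0), B j) - Ec)
            (fun j => if lam j < lamI - deriv γ 0 then B j else 0) →
        Es = (∑ j ∈ Finset.univ.filter (fun j => lam j < lamI - deriv γ 0), B j) - Ec ∧
          Eb = fun j => if lam j < lamI - deriv γ 0 then B j else 0) := by
  set b : ι → ℝ := fun j => if lam j < lamI - deriv γ 0 then B j else 0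
  set T := ∑ j ∈ Finset.univ.filter (fun j => lam j < lamI - deriv γ 0), B j
  have hsum : ∑ j, b j = T := (Finset.sum_filter _ _).symm
  have hgen : Ec + (T - Ec) - ∑ j, b j = 0 := by rw [hsum]; ring
  refine ⟨⟨sub_pos.mpr hbig, hgen⟩, fun Es Eb _ hEb hg => ?_⟩
  have hbuy : ∀ j, Eb j ≠ b j →
      γ (b j) - (lamI - lam j) * b j < γ (Eb j) - (lamI - lam j) * Eb j := fun j hne => by
    by_cases hj : lam j < lamI - deriv γ 0
    · simp only [b, if_pos hj] at hne ⊢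
      exact hγconv.sub_mul_lt_of_deriv_eq_s8 trivial trivial (hγdiff _) (hB j hj).1 hne
    · simp only [b, if_neg hj] at hne ⊢
      exact hγconv.sub_mul_lt_of_le_deriv trivial trivial (hγdiff 0) (by linarith)
        ((hEb j).lt_of_ne' hne)
  have hsell : Ec + Es - ∑ j, Eb j ≠ 0 →
      C 0 - lamI * 0 < C (Ec + Es - ∑ j, Eb j) - lamI * (Ec + Es - ∑ j, Eb j) := fun hne =>
    hCconv.sub_mul_lt_of_le_deriv trivial trivial (hCdiff 0) hlamI (hg.lt_of_ne' hne)
  by_cases hopt : Ec + Es - ∑ j, Eb j = 0 ∧ Eb = b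
  · obtain ⟨hg0, rfl⟩ := hopt
    obtain rfl : Es = T - Ec := by linarith
    exact ⟨le_rfl, fun _ => ⟨rfl, rfl⟩⟩
  · have hlt :
        netExpenditure C γ Ec lamI lam (T - Ec) b < netExpenditure C γ Ec lamI lam Es Eb := by
      have := add_sum_lt_add_sum_of_ne (Φ := fun g => C g - lamI * g)
        (ψ := fun j x => γ x - (lamI - lam j) * x) hsell hbuy (not_and_or.mp hopt)
      rw [netExpenditure_eq_add_sum, netExpenditure_eq_add_sum, hgen]
      linarith
    exact ⟨hlt.le, fun h => absurd h hlt.ne'⟩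

/-- Case 5 of the microgrid subproblem: the microgrid sells and buys but does not
generate. `B j = Γ(λᵢ - λⱼ)` are the bought energies from the cheap neighbors. -/
theorem case5_sell_buy_no_generation
    {ι : Type*} [Fintype ι]
    (C γ : ℝ → ℝ)
    (hCconv : StrictConvexOn ℝ Set.univ C) (hCmono : StrictMono C)
    (hCdiff : Differentiable ℝ C)
    (hγconv : StrictConvexOn ℝ Set.univ γ) (hγmono : StrictMono γ)
    (hγdiff : Differentiable ℝ γ) (hγ0 : γ 0 = 0)
    (Ec : ℝ) (hEc : 0 < Ec)
    (lamI : ℝ) (lam : ι → ℝ)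
    (B : ι → ℝ)
    (hB : ∀ j, lam j < lamI - deriv γ 0 → deriv γ (B j) = lamI - lam j ∧ 0 < B j)
    (hlamI : lamI ≤ deriv C 0)
    (hSne : ∃ j, lam j < lamI - deriv γ 0)
    (hbig : Ec < ∑ j ∈ Finset.univ.filter (fun j => lam j < lamI - deriv γ 0), B j) :
    -- the optimal sold energy is positive and the generated energy is zero
    (0 < (∑ j ∈ Finset.univ.filter (fun j => lam j < lamI - deriv γ 0), B j) - Ec ∧
      Ec + ((∑ j ∈ Finset.univ.filter (fun j => lam j < lamI - deriv γ 0), B j) - Ec) -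
        (∑ j, (if lam j < lamI - deriv γ 0 then B j else 0)) = 0) ∧
    -- unique global minimizer
    ∀ (Es : ℝ) (Eb : ι → ℝ), 0 ≤ Es → (∀ j, 0 ≤ Eb j) →
      0 ≤ Ec + Es - ∑ j, Eb j →
      netExpenditure C γ Ec lamI lam
          ((∑ j ∈ Finset.univ.filter (fun j => lam j < lamI - deriv γ 0), B j) - Ec)
          (fun j => if lam j < lamI - deriv γ 0 then B j else 0) ≤
        netExpenditure C γ Ec lamI lam Es Eb ∧
      (netExpenditure C γ Ec lamI lam Es Eb =
          netExpenditure C γ Ec lamI lam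
            ((∑ j ∈ Finset.univ.filter (fun j => lam j < lamI - deriv γ 0), B j) - Ec)
            (fun j => if lam j < lamI - deriv γ 0 then B j else 0) →
        Es = (∑ j ∈ Finset.univ.filter (fun j => lam j < lamI - deriv γ 0), B j) - Ec ∧
          Eb = fun j => if lam j < lamI - deriv γ 0 then B j else 0) :=
  case5_sell_buy_no_generation_general C γ hCconv hCdiff hγconv hγdiff Ec lamI lam B hB hlamI hbig
end
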